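/- Let V be a countable set with measure μ, and let u, v : V → ℝ. Suppose for some ε ∈ (0,1): u, v ∈ L^{2−ε}(V,μ) ∩ L^{2+ε}(V,μ) ∩ L²(V,μ). Then the limit lim_{t→0} (1/t)·∑_x [ (u+tv)²(x) log((u+tv)(x)²) − u(x)² log(u(x)²) ] μ(x) exists and equals 2∑_x [u(x)v(x) + u(x)v(x) log(u(x)²)] μ(x). -/

import Mathlib

/-!
Write `φ(s) = s² log s²`, so that `φ'(s) = 2 s log s² + 2 s` (also at `s = 0`, where `φ'(0) = 0`).
From `|log x| ≤ (x^ε + x^{-ε}) / ε` one gets `|φ'(s)| ≤ C_ε (|s|^{1-ε} + |s|^{1+ε})`, so by the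
mean value theorem, for `|t| ≤ 1` the difference quotient `(φ(u + t v) - φ(u)) / t` is bounded
pointwise by `C_ε ((|u| + |v|)^{2-ε} + (|u| + |v|)^{2+ε})`, which is `μ`-summable because `u` and
`v` lie in `ℓ^{2-ε}(μ) ∩ ℓ^{2+ε}(μ)`. Dominated convergence for series then lets the pointwise
derivative `φ'(u) v` pass through the sum.
-/

open Real Filter Topology

namespace Real

lemma add_rpow_le_two_rpow_mul_rpow_add_rpow {p a b : ℝ} (ha : 0 ≤ a) (hb : 0 ≤ b)
    (hp : 0 ≤ p) : (a + b) ^ p ≤ 2 ^ p * (a ^ p + b ^ p) := calc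
  (a + b) ^ p ≤ (2 * max a b) ^ p := by
    rw [two_mul]
    exact rpow_le_rpow (add_nonneg ha hb) (add_le_add (le_max_left a b) (le_max_right a b)) hp
  _ = 2 ^ p * max a b ^ p := mul_rpow zero_le_two (le_max_of_le_left ha)
  _ ≤ 2 ^ p * (a ^ p + b ^ p) := by
    gcongr
    rcases max_choice a b with h | h <;> rw [h]
    · exact le_add_of_nonneg_right (rpow_nonneg hb p)
    · exact le_add_of_nonneg_left (rpow_nonneg ha p)

lemma abs_log_le_rpow_add_rpow_neg_div {x ε : ℝ} (hx : 0 < x) (hε : 0 < ε) :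
    |log x| ≤ (x ^ ε + x ^ (-ε)) / ε := by
  have hle : log x ≤ x ^ ε / ε := log_le_rpow_div hx.le hε
  have hge : -log x ≤ x ^ (-ε) / ε := by
    rw [← log_inv, rpow_neg hx.le, ← inv_rpow hx.le]
    exact log_le_rpow_div (inv_nonneg.mpr hx.le) hε
  rw [add_div]
  exact abs_le.mpr ⟨by linarith [rpow_nonneg hx.le ε, div_nonneg (rpow_nonneg hx.le ε) hε.le],
    by linarith [div_nonneg (rpow_nonneg hx.le (-ε)) hε.le]⟩

lemma abs_mul_log_sq_le {ε : ℝ} (hε : 0 < ε) (s : ℝ) :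
    |s * log (s ^ 2)| ≤ 2 / ε * (|s| ^ (1 - ε) + |s| ^ (1 + ε)) := by
  rcases eq_or_ne s 0 with rfl | hs
  · simp only [ne_eq, OfNat.ofNat_ne_zero, not_false_eq_true, zero_pow, log_zero, mul_zero,
      abs_zero]
    positivity
  have hs' : 0 < |s| := abs_pos.mpr hs
  calc |s * log (s ^ 2)| = 2 * (|s| * |log (|s|)|) := by
        rw [← sq_abs, log_pow, abs_mul, abs_mul]; push_cast; rw [abs_two]; ring
    _ ≤ 2 * (|s| * ((|s| ^ ε + |s| ^ (-ε)) / ε)) := by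
        gcongr; exact abs_log_le_rpow_add_rpow_neg_div hs' hε
    _ = 2 / ε * (|s| ^ (1 - ε) + |s| ^ (1 + ε)) := by
        rw [sub_eq_add_neg, rpow_add hs', rpow_add hs', rpow_one]; ring

lemma le_rpow_one_sub_add_rpow_one_add {x ε : ℝ} (hx : 0 ≤ x) (hε : 0 ≤ ε) :
    x ≤ x ^ (1 - ε) + x ^ (1 + ε) := by
  rcases hx.eq_or_lt with rfl | hx
  · positivity
  rcases le_total x 1 with h | h
  · calc x = x ^ (1 : ℝ) := (rpow_one x).symm
      _ ≤ x ^ (1 - ε) := rpow_le_rpow_of_exponent_ge hx h (by linarith)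
      _ ≤ _ := le_add_of_nonneg_right (by positivity)
  · calc x = x ^ (1 : ℝ) := (rpow_one x).symm
      _ ≤ x ^ (1 + ε) := rpow_le_rpow_of_exponent_le h (by linarith)
      _ ≤ _ := le_add_of_nonneg_left (by positivity)

lemma tendsto_mul_log_sq_nhds_zero : Tendsto (fun t : ℝ => t * log (t ^ 2)) (𝓝 0) (𝓝 0) := by
  have h : Tendsto (fun t : ℝ => |t| * log |t|) (𝓝 0) (𝓝 0) := by
    simpa only [Function.comp_def, abs_zero, zero_mul] using
      (continuous_mul_log.comp continuous_abs).tendsto (0 : ℝ)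
  refine tendsto_zero_iff_norm_tendsto_zero.mpr ?_
  convert (h.norm.const_mul 2) using 1
  · ext t
    simp only [log_pow, log_abs, norm_mul, norm_eq_abs, abs_abs]
    push_cast; rw [abs_two]; ring
  · simp

lemma hasDerivAt_sq_mul_log_sq (s : ℝ) :
    HasDerivAt (fun y : ℝ => y ^ 2 * log (y ^ 2)) (2 * s * log (s ^ 2) + 2 * s) s := by
  rcases eq_or_ne s 0 with rfl | hs
  · rw [hasDerivAt_iff_tendsto_slope_zero]
    convert tendsto_mul_log_sq_nhds_zero.mono_left nhdsWithin_le_nhds using 1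
    · ext t
      rcases eq_or_ne t 0 with rfl | ht
      · simp
      · simp only [zero_add, ne_eq, OfNat.ofNat_ne_zero, not_false_eq_true, zero_pow, log_zero,
          mul_zero, sub_zero, smul_eq_mul]
        field_simp
    · simp
  · have hsq : HasDerivAt (fun y : ℝ => y ^ 2) (2 * s) s := by
      simpa using hasDerivAt_pow 2 s
    have h : HasDerivAt (fun y : ℝ => y ^ 2 * log (y ^ 2)) _ s :=
      hsq.mul (hsq.log (pow_ne_zero 2 hs))
    convert h using 1
    field_simp

lemma abs_two_mul_mul_log_sq_add_two_mul_le {ε r s : ℝ} (hε0 : 0 < ε) (hε1 : ε < 1)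
    (hs : |s| ≤ r) :
    |2 * s * log (s ^ 2) + 2 * s| ≤ (4 / ε + 2) * (r ^ (1 - ε) + r ^ (1 + ε)) := calc
  |2 * s * log (s ^ 2) + 2 * s| ≤ |2 * s * log (s ^ 2)| + |2 * s| := abs_add_le _ _
  _ = 2 * |s * log (s ^ 2)| + 2 * |s| := by rw [mul_assoc, abs_mul, abs_mul 2, abs_two]
  _ ≤ 2 * (2 / ε * (|s| ^ (1 - ε) + |s| ^ (1 + ε))) + 2 * (|s| ^ (1 - ε) + |s| ^ (1 + ε)) := by
    gcongr
    · exact abs_mul_log_sq_le hε0 s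
    · exact le_rpow_one_sub_add_rpow_one_add (abs_nonneg s) hε0.le
  _ = (4 / ε + 2) * (|s| ^ (1 - ε) + |s| ^ (1 + ε)) := by ring
  _ ≤ (4 / ε + 2) * (r ^ (1 - ε) + r ^ (1 + ε)) := by gcongr

lemma abs_sq_mul_log_sq_sub_le {ε r a b : ℝ} (hε0 : 0 < ε) (hε1 : ε < 1) (ha : |a| ≤ r)
    (hb : |b| ≤ r) :
    |b ^ 2 * log (b ^ 2) - a ^ 2 * log (a ^ 2)|
      ≤ (4 / ε + 2) * (r ^ (1 - ε) + r ^ (1 + ε)) * |b - a| :=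
  (convex_Icc (-r) r).norm_image_sub_le_of_norm_hasDerivWithin_le
    (fun s _ => (hasDerivAt_sq_mul_log_sq s).hasDerivWithinAt)
    (fun _ hs => abs_two_mul_mul_log_sq_add_two_mul_le hε0 hε1 (abs_le.mpr hs))
    (abs_le.mp ha) (abs_le.mp hb)

lemma abs_sq_mul_log_sq_add_mul_sub_le {ε r a b t : ℝ} (hε0 : 0 < ε) (hε1 : ε < 1)
    (hab : |a| + |b| ≤ r) (ht : |t| ≤ 1) :
    |(a + t * b) ^ 2 * log ((a + t * b) ^ 2) - a ^ 2 * log (a ^ 2)|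
      ≤ (4 / ε + 2) * (r ^ (2 - ε) + r ^ (2 + ε)) * |t| := by
  have hr : 0 ≤ r := le_trans (by positivity) hab
  have ha : |a| ≤ r := le_trans (le_add_of_nonneg_right (abs_nonneg b)) hab
  have hb : |b| ≤ r := le_trans (le_add_of_nonneg_left (abs_nonneg a)) hab
  have hatb : |a + t * b| ≤ r := calc
    |a + t * b| ≤ |a| + |t| * |b| := by rw [← abs_mul]; exact abs_add_le _ _
    _ ≤ r := by grw [mul_le_of_le_one_left (abs_nonneg b) ht]; exact hab
  calc _ ≤ (4 / ε + 2) * (r ^ (1 - ε) + r ^ (1 + ε)) * |a + t * b - a| :=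
        abs_sq_mul_log_sq_sub_le hε0 hε1 ha hatb
    _ = (4 / ε + 2) * (r ^ (1 - ε) * |b| + r ^ (1 + ε) * |b|) * |t| := by
        rw [add_sub_cancel_left, abs_mul]; ring
    _ ≤ (4 / ε + 2) * (r ^ (1 - ε) * r + r ^ (1 + ε) * r) * |t| := by
        have := rpow_nonneg hr (1 - ε)
        have := rpow_nonneg hr (1 + ε)
        gcongr
    _ = (4 / ε + 2) * (r ^ (2 - ε) + r ^ (2 + ε)) * |t| := by
        rw [← rpow_add_one' hr (by linarith), ← rpow_add_one' hr (by linarith)]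
        ring_nf

lemma hasDerivAt_sq_mul_log_sq_add_mul (a b : ℝ) :
    HasDerivAt (fun t : ℝ => (a + t * b) ^ 2 * log ((a + t * b) ^ 2))
      (2 * (a * b + a * b * log (a ^ 2))) 0 := by
  have hline : HasDerivAt (fun t : ℝ => a + t * b) b 0 := by
    simpa using ((hasDerivAt_id (0 : ℝ)).mul_const b).const_add a
  refine ((hasDerivAt_sq_mul_log_sq (a + 0 * b)).comp 0 hline).congr_deriv ?_
  simp only [zero_mul, add_zero]
  ring

end Real

lemma summable_abs_add_abs_rpow_mul {ι : Type*} {f g μ : ι → ℝ} {p : ℝ} (hp : 0 ≤ p)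
    (hμ : ∀ i, 0 ≤ μ i) (hf : Summable fun i => |f i| ^ p * μ i)
    (hg : Summable fun i => |g i| ^ p * μ i) :
    Summable fun i => (|f i| + |g i|) ^ p * μ i :=
  ((hf.add hg).mul_left (2 ^ p)).of_nonneg_of_le
    (fun i => mul_nonneg (by positivity) (hμ i))
    (fun i => by
      rw [← add_mul, ← mul_assoc]
      exact mul_le_mul_of_nonneg_right
        (add_rpow_le_two_rpow_mul_rpow_add_rpow (abs_nonneg _) (abs_nonneg _) hp) (hμ i))

theorem stmt_17_general {V : Type*} (μ : V → ℝ) (hμ : ∀ x, 0 ≤ μ x)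
    (ε : ℝ) (hε0 : 0 < ε) (hε1 : ε < 1) (u v : V → ℝ)
    (hu2m : Summable (fun x => |u x| ^ (2 - ε) * μ x))
    (hu2p : Summable (fun x => |u x| ^ (2 + ε) * μ x))
    (hv2m : Summable (fun x => |v x| ^ (2 - ε) * μ x))
    (hv2p : Summable (fun x => |v x| ^ (2 + ε) * μ x)) :
    Filter.Tendsto
      (fun t : ℝ => (1 / t) *
        ∑' x, ((u x + t * v x) ^ 2 * Real.log ((u x + t * v x) ^ 2)
          - u x ^ 2 * Real.log (u x ^ 2)) * μ x)
      (nhdsWithin 0 {0}ᶜ)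
      (nhds (2 * ∑' x, (u x * v x + u x * v x * Real.log (u x ^ 2)) * μ x)) := by
  set w : V → ℝ := fun x => |u x| + |v x|
  have hbound : Summable fun x => (4 / ε + 2) * (w x ^ (2 - ε) + w x ^ (2 + ε)) * μ x := by
    have hm := summable_abs_add_abs_rpow_mul (by linarith) hμ hu2m hv2m
    have hp := summable_abs_add_abs_rpow_mul (by linarith) hμ hu2p hv2p
    simpa only [mul_assoc, add_mul] using (hm.add hp).mul_left (4 / ε + 2)
  simp only [← tsum_mul_left]
  refine tendsto_tsum_of_dominated_convergence hbound (fun x => ?_) ?_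
  · have h := ((hasDerivAt_sq_mul_log_sq_add_mul (u x) (v x)).tendsto_slope_zero).mul_const (μ x)
    simp only [zero_add, zero_mul, add_zero, smul_eq_mul] at h
    convert h using 2 <;> ring
  · have hnear : ∀ᶠ t : ℝ in 𝓝[≠] 0, |t| ≤ 1 :=
      eventually_nhdsWithin_of_eventually_nhds (eventually_abs_sub_lt 0 one_pos |>.mono
        fun t ht => by simpa using ht.le)
    filter_upwards [hnear, self_mem_nhdsWithin] with t ht ht0 x
    rw [norm_mul, norm_mul, norm_eq_abs, norm_eq_abs, norm_eq_abs, abs_of_nonneg (hμ x),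
      one_div, abs_inv, ← mul_assoc]
    calc _ ≤ |t|⁻¹ * ((4 / ε + 2) * (w x ^ (2 - ε) + w x ^ (2 + ε)) * |t|) * μ x := by
          gcongr
          · exact hμ x
          · exact abs_sq_mul_log_sq_add_mul_sub_le hε0 hε1 le_rfl ht
      _ = _ := by field_simp [abs_ne_zero.mpr ht0]

theorem stmt_17 {V : Type*} [Countable V] (μ : V → ℝ) (hμ : ∀ x, 0 ≤ μ x)
    (ε : ℝ) (hε0 : 0 < ε) (hε1 : ε < 1) (u v : V → ℝ)
    (hu2m : Summable (fun x => |u x| ^ (2 - ε) * μ x))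
    (hu2p : Summable (fun x => |u x| ^ (2 + ε) * μ x))
    (hu2 : Summable (fun x => |u x| ^ (2 : ℝ) * μ x))
    (hv2m : Summable (fun x => |v x| ^ (2 - ε) * μ x))
    (hv2p : Summable (fun x => |v x| ^ (2 + ε) * μ x))
    (hv2 : Summable (fun x => |v x| ^ (2 : ℝ) * μ x)) :
    Filter.Tendsto
      (fun t : ℝ => (1 / t) *
        ∑' x, ((u x + t * v x) ^ 2 * Real.log ((u x + t * v x) ^ 2)
          - u x ^ 2 * Real.log (u x ^ 2)) * μ x)
      (nhdsWithin 0 {0}ᶜ)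
      (nhds (2 * ∑' x, (u x * v x + u x * v x * Real.log (u x ^ 2)) * μ x)) :=
  stmt_17_general μ hμ ε hε0 hε1 u v hu2m hu2p hv2m hv2p
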